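/- Let Q ⊆ 2^ω be measurable, σ a string with μ_σ(Q) > ε for some ε > 0. Define Q^ε_σ = {X ∈ Q ∩ [σ] : ∀ n ≥ |σ|, μ_{X↾n}(Q) ≥ ε}. Then μ_σ(Q^ε_σ) > μ_σ(Q) − ε; in particular Q^ε_σ is nonempty. -/

import Mathlib

open MeasureTheory Filter
open scoped ENNReal

/-! Every point of `Q ∩ [σ]` outside `Q^ε_σ` passes through a minimal extension `τ` of `σ` with
`μ_τ(Q) < ε`. Minimal extensions form an antichain, so their cylinders are disjoint subsets of
`[σ]`, and the part of `Q ∩ [σ]` that is lost has measure at most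
`∑ μ(Q ∩ [τ]) < ε ∑ μ([τ]) ≤ ε μ([σ])`; the first inequality is strict because either some `[τ]`
is non-null, or all are null and the left-hand sum vanishes. -/

/-- The cylinder of infinite binary sequences extending the finite string `τ`. -/
def cyl (τ : List Bool) : Set (ℕ → Bool) := {X | ∀ i : Fin τ.length, X i = τ.get i}

/-- Relative measure `μ_τ(P) = μ(P ∩ [τ]) / μ([τ])`. -/
noncomputable def relMeas (μ : Measure (ℕ → Bool)) (τ : List Bool)
    (P : Set (ℕ → Bool)) : ℝ≥0∞ := μ (P ∩ cyl τ) / μ (cyl τ)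

/-- The length-`n` prefix of an infinite binary sequence. -/
def pre (X : ℕ → Bool) (n : ℕ) : List Bool := List.ofFn fun i : Fin n => X i

@[simp]
lemma length_pre (X : ℕ → Bool) (n : ℕ) : (pre X n).length = n := by simp [pre]

lemma mem_cyl_iff_pre_eq {X : ℕ → Bool} {τ : List Bool} : X ∈ cyl τ ↔ pre X τ.length = τ := by
  refine ⟨fun h => List.ext_get (length_pre X τ.length) fun i _ hi => ?_, fun h i => ?_⟩
  · simpa [pre] using h ⟨i, hi⟩
  · have := congrArg (·[i]?) h
    simpa [pre] using this

lemma mem_cyl_pre (X : ℕ → Bool) (n : ℕ) : X ∈ cyl (pre X n) := by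
  rw [mem_cyl_iff_pre_eq, length_pre]

lemma pre_prefix_pre (X : ℕ → Bool) {m n : ℕ} (h : m ≤ n) : pre X m <+: pre X n := by
  rw [List.prefix_iff_eq_take]
  apply List.ext_get (by simp [h])
  intro i _ _
  simp [pre]

lemma cyl_subset_cyl {τ τ' : List Bool} (h : τ <+: τ') : cyl τ' ⊆ cyl τ := by
  intro X hX
  rw [mem_cyl_iff_pre_eq] at hX ⊢
  have hpre := List.prefix_iff_eq_take.mp (pre_prefix_pre X h.length_le)
  rw [length_pre, hX] at hpre
  rw [hpre, ← List.prefix_iff_eq_take.mp h]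

lemma prefix_or_prefix_of_mem_cyl {τ τ' : List Bool} {X : ℕ → Bool} (h : X ∈ cyl τ)
    (h' : X ∈ cyl τ') : τ <+: τ' ∨ τ' <+: τ := by
  rw [mem_cyl_iff_pre_eq] at h h'
  rw [← h, ← h']
  exact (le_total τ.length τ'.length).imp (pre_prefix_pre X) (pre_prefix_pre X)

lemma measurableSet_cyl (τ : List Bool) : MeasurableSet (cyl τ) := by
  have : cyl τ = ⋂ i : Fin τ.length, (fun X : ℕ → Bool => X i) ⁻¹' {τ.get i} := by
    ext X; simp [cyl, Set.mem_iInter]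
  rw [this]
  exact MeasurableSet.iInter fun i =>
    (measurable_pi_apply (i : ℕ)) (measurableSet_singleton _)

def minimalExtensions (p : List Bool → Prop) (σ : List Bool) : Set (List Bool) :=
  {τ | σ <+: τ ∧ p τ ∧ ∀ ρ, σ <+: ρ → ρ <+: τ → p ρ → ρ = τ}

section minimalExtensions

variable {p : List Bool → Prop} {σ : List Bool}

lemma pairwiseDisjoint_cyl_minimalExtensions : (minimalExtensions p σ).PairwiseDisjoint cyl := by
  intro τ hτ τ' hτ' hne
  refine Set.disjoint_left.mpr fun X hX hX' => hne ?_
  rcases prefix_or_prefix_of_mem_cyl hX hX' with h | h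
  · exact hτ'.2.2 τ hτ.1 h hτ.2.1
  · exact (hτ.2.2 τ' hτ'.1 h hτ'.2.1).symm

lemma exists_mem_minimalExtensions_of_mem_cyl {X : ℕ → Bool} (hX : X ∈ cyl σ)
    (h : ∃ n ≥ σ.length, p (pre X n)) : ∃ τ ∈ minimalExtensions p σ, X ∈ cyl τ := by
  classical
  have hσ : pre X σ.length = σ := mem_cyl_iff_pre_eq.mp hX
  let n := Nat.find h
  obtain ⟨hn, hpn⟩ : σ.length ≤ n ∧ p (pre X n) := Nat.find_spec h
  refine ⟨pre X n, ⟨hσ ▸ pre_prefix_pre X hn, hpn, fun ρ hσρ hρ hpρ => ?_⟩, mem_cyl_pre X n⟩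
  have hρX : pre X ρ.length = ρ := mem_cyl_iff_pre_eq.mp (cyl_subset_cyl hρ (mem_cyl_pre X n))
  have hmin : n ≤ ρ.length := Nat.find_min' h ⟨hσρ.length_le, hρX.symm ▸ hpρ⟩
  exact hρ.eq_of_length (le_antisymm hρ.length_le (by simpa using hmin))

lemma tsum_measure_cyl_minimalExtensions_le (μ : Measure (ℕ → Bool)) :
    ∑' τ : minimalExtensions p σ, μ (cyl τ) ≤ μ (cyl σ) := by
  rw [← measure_biUnion (Set.to_countable _) pairwiseDisjoint_cyl_minimalExtensions
    fun τ _ => measurableSet_cyl τ]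
  exact measure_mono (Set.iUnion₂_subset fun τ hτ => cyl_subset_cyl hτ.1)

end minimalExtensions

section relMeas

variable {μ : Measure (ℕ → Bool)} {P : Set (ℕ → Bool)} {τ : List Bool} {ε : ℝ≥0∞}

lemma measure_cyl_ne_zero_of_relMeas_ne_zero (h : relMeas μ τ P ≠ 0) : μ (cyl τ) ≠ 0 := by
  intro h0
  simp [relMeas, h0, measure_mono_null Set.inter_subset_right h0] at h

lemma measure_cyl_ne_top_of_relMeas_ne_zero (h : relMeas μ τ P ≠ 0) : μ (cyl τ) ≠ ∞ := by
  intro htop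
  simp [relMeas, htop] at h

lemma measure_inter_cyl_lt_of_relMeas_lt (h : relMeas μ τ P < ε) (h0 : μ (cyl τ) ≠ 0)
    (htop : μ (cyl τ) ≠ ∞) : μ (P ∩ cyl τ) < ε * μ (cyl τ) :=
  (ENNReal.div_lt_iff (.inl h0) (.inl htop)).mp h

lemma measure_inter_cyl_le_of_relMeas_lt (h : relMeas μ τ P < ε) (htop : μ (cyl τ) ≠ ∞) :
    μ (P ∩ cyl τ) ≤ ε * μ (cyl τ) := by
  by_cases h0 : μ (cyl τ) = 0
  · simp [h0, measure_mono_null Set.inter_subset_right h0]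
  · exact (measure_inter_cyl_lt_of_relMeas_lt h h0 htop).le

end relMeas

/-- The paper's `Q^ε_σ`. -/
def robustPart (μ : Measure (ℕ → Bool)) (Q : Set (ℕ → Bool)) (σ : List Bool) (ε : ℝ≥0∞) :
    Set (ℕ → Bool) :=
  {X ∈ Q ∩ cyl σ | ∀ n ≥ σ.length, ε ≤ relMeas μ (pre X n) Q}

section robustPart

variable {μ : Measure (ℕ → Bool)} {Q : Set (ℕ → Bool)} {σ : List Bool} {ε : ℝ≥0∞}

lemma robustPart_subset : robustPart μ Q σ ε ⊆ Q ∩ cyl σ := fun _ hX => hX.1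

lemma diff_robustPart_subset :
    (Q ∩ cyl σ) \ robustPart μ Q σ ε ⊆
      ⋃ τ ∈ minimalExtensions (fun τ => relMeas μ τ Q < ε) σ, Q ∩ cyl τ := by
  rintro X ⟨⟨hXQ, hXσ⟩, hXS⟩
  have hbad : ∃ n ≥ σ.length, relMeas μ (pre X n) Q < ε := by
    by_contra! h
    exact hXS ⟨⟨hXQ, hXσ⟩, h⟩
  obtain ⟨τ, hτ, hXτ⟩ :=
    exists_mem_minimalExtensions_of_mem_cyl (p := fun τ => relMeas μ τ Q < ε) hXσ hbad
  exact Set.mem_biUnion hτ ⟨hXQ, hXτ⟩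

lemma measure_diff_robustPart_lt (hε : ε ≠ 0) (hεQ : ε < relMeas μ σ Q) :
    μ ((Q ∩ cyl σ) \ robustPart μ Q σ ε) < ε * μ (cyl σ) := by
  set M := minimalExtensions (fun τ => relMeas μ τ Q < ε) σ
  have hσ0 : μ (cyl σ) ≠ 0 := measure_cyl_ne_zero_of_relMeas_ne_zero (pos_of_gt hεQ).ne'
  have hσtop : μ (cyl σ) ≠ ∞ := measure_cyl_ne_top_of_relMeas_ne_zero (pos_of_gt hεQ).ne'
  have htop : ∀ τ : M, μ (cyl τ) ≠ ∞ := fun τ =>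
    ne_top_of_le_ne_top hσtop (measure_mono (cyl_subset_cyl τ.2.1))
  have hterm : ∀ τ : M, μ (Q ∩ cyl τ) ≤ ε * μ (cyl τ) := fun τ =>
    measure_inter_cyl_le_of_relMeas_lt τ.2.2.1 (htop τ)
  have hsum : ∑' τ : M, ε * μ (cyl τ) ≤ ε * μ (cyl σ) := by
    rw [ENNReal.tsum_mul_left]
    gcongr
    exact tsum_measure_cyl_minimalExtensions_le μ
  have hlt : ∑' τ : M, μ (Q ∩ cyl τ) < ε * μ (cyl σ) := by
    by_cases hpos : ∃ τ : M, μ (cyl τ) ≠ 0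
    · obtain ⟨τ, hτ⟩ := hpos
      have hfin : ∑' τ : M, μ (Q ∩ cyl τ) ≠ ∞ :=
        ne_top_of_le_ne_top (ENNReal.mul_ne_top (ne_top_of_lt hεQ) hσtop)
          ((ENNReal.tsum_le_tsum hterm).trans hsum)
      calc ∑' τ : M, μ (Q ∩ cyl τ)
          < ∑' τ : M, ε * μ (cyl τ) := ENNReal.tsum_lt_tsum hfin hterm
            (measure_inter_cyl_lt_of_relMeas_lt τ.2.2.1 hτ (htop τ))
        _ ≤ ε * μ (cyl σ) := hsum
    · simp only [not_exists, not_not] at hpos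
      have hzero : ∑' τ : M, μ (Q ∩ cyl τ) = 0 :=
        ENNReal.tsum_eq_zero.mpr fun τ => measure_mono_null Set.inter_subset_right (hpos τ)
      rw [hzero]
      exact ENNReal.mul_pos hε hσ0
  calc μ ((Q ∩ cyl σ) \ robustPart μ Q σ ε)
      ≤ μ (⋃ τ ∈ M, Q ∩ cyl τ) := measure_mono diff_robustPart_subset
    _ ≤ ∑' τ : M, μ (Q ∩ cyl τ) := measure_biUnion_le μ M.to_countable _
    _ < ε * μ (cyl σ) := hlt

lemma relMeas_sub_lt_relMeas_robustPart (hε : ε ≠ 0) (hεQ : ε < relMeas μ σ Q) :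
    relMeas μ σ Q - ε < relMeas μ σ (robustPart μ Q σ ε) := by
  have hσ0 : μ (cyl σ) ≠ 0 := measure_cyl_ne_zero_of_relMeas_ne_zero (pos_of_gt hεQ).ne'
  have hσtop : μ (cyl σ) ≠ ∞ := measure_cyl_ne_top_of_relMeas_ne_zero (pos_of_gt hεQ).ne'
  rw [ENNReal.sub_lt_iff_lt_right (ne_top_of_lt hεQ) hεQ.le, relMeas, relMeas,
    ENNReal.div_lt_iff (.inl hσ0) (.inl hσtop), add_mul, ENNReal.div_mul_cancel hσ0 hσtop]
  have hS : Q ∩ cyl σ ∩ robustPart μ Q σ ε = robustPart μ Q σ ε ∩ cyl σ := by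
    rw [Set.inter_eq_right.mpr robustPart_subset,
      Set.inter_eq_left.mpr (robustPart_subset.trans Set.inter_subset_right)]
  calc μ (Q ∩ cyl σ)
      ≤ μ (robustPart μ Q σ ε ∩ cyl σ) + μ ((Q ∩ cyl σ) \ robustPart μ Q σ ε) :=
        hS ▸ measure_le_inter_add_sdiff μ _ _
    _ < μ (robustPart μ Q σ ε ∩ cyl σ) + ε * μ (cyl σ) := by
        gcongr
        · exact ne_top_of_le_ne_top hσtop (measure_mono Set.inter_subset_right)
        · exact measure_diff_robustPart_lt hε hεQ

lemma nonempty_robustPart (hε : ε ≠ 0) (hεQ : ε < relMeas μ σ Q) :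
    (robustPart μ Q σ ε).Nonempty := by
  have hlt := relMeas_sub_lt_relMeas_robustPart hε hεQ
  refine Set.nonempty_iff_ne_empty.mpr fun hempty => ?_
  simp [hempty, relMeas] at hlt

end robustPart

theorem stmt3_general (μ : Measure (ℕ → Bool))
    (Q : Set (ℕ → Bool)) (σ : List Bool)
    (ε : ℝ≥0∞) (hε : 0 < ε) (hεQ : ε < relMeas μ σ Q) :
    relMeas μ σ Q - ε <
      relMeas μ σ {X ∈ Q ∩ cyl σ | ∀ n ≥ σ.length, ε ≤ relMeas μ (pre X n) Q} ∧
    {X ∈ Q ∩ cyl σ | ∀ n ≥ σ.length, ε ≤ relMeas μ (pre X n) Q}.Nonempty :=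
  ⟨relMeas_sub_lt_relMeas_robustPart hε.ne' hεQ, nonempty_robustPart hε.ne' hεQ⟩

theorem stmt3 (μ : Measure (ℕ → Bool))
    (hμ : ∀ τ : List Bool, μ (cyl τ) = (2 : ℝ≥0∞)⁻¹ ^ τ.length)
    (Q : Set (ℕ → Bool)) (hQ : MeasurableSet Q) (σ : List Bool)
    (ε : ℝ≥0∞) (hε : 0 < ε) (hεQ : ε < relMeas μ σ Q) :
    relMeas μ σ Q - ε <
      relMeas μ σ {X ∈ Q ∩ cyl σ | ∀ n ≥ σ.length, ε ≤ relMeas μ (pre X n) Q} ∧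
    {X ∈ Q ∩ cyl σ | ∀ n ≥ σ.length, ε ≤ relMeas μ (pre X n) Q}.Nonempty :=
  stmt3_general μ Q σ ε hε hεQ
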